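/- arXiv:1509.05009 — 4 statements merged into one kernel-verified Lean document; each statement's English description precedes it below -/
import Mathlib

section
/- Let M,N ∈ ℕ and consider the mapping x ↦ U(x) := A(x)·D(x)·B(x)ᵀ ∈ ℝ^{M×M}, where A(x), B(x) ∈ ℝ^{M×N} hold the first MN and next MN entries of x ∈ ℝ^{2MN+N}, and D(x) ∈ ℝ^{N×N} is diagonal with the last N entries of x on its diagonal. Then the set of points x for which rank(U(x)) ≠ min{M,N} has Lebesgue measure zero. -/
/-!
The leading `min M N × min M N` minor of `A D Bᵀ` is a polynomial in the `2MN + N` coordinates.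
It is not the zero polynomial, since it equals `1` when `D = 1` and `A = B` has the identity as
its leading block, and the zero set of a nonzero real polynomial is Lebesgue-null (induction on
the number of variables and Fubini: a nonzero one-variable polynomial has finitely many roots).
Off that zero set `A D Bᵀ` has an invertible `min M N` square submatrix, hence rank at least
`min M N`, while the rank is at most `rank A ≤ min M N` everywhere.
-/

open MeasureTheory Matrix

namespace MvPolynomial

theorem volume_zeroSet_eq_zero_fin : ∀ {n : ℕ} {p : MvPolynomial (Fin n) ℝ}, p ≠ 0 →
    volume {x : Fin n → ℝ | eval x p = 0} = 0
  | 0, p, hp => by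
    convert measure_empty (μ := (volume : Measure (Fin 0 → ℝ)))
    refine Set.eq_empty_of_forall_notMem fun x hx ↦ hp (funext fun y ↦ ?_)
    rwa [Subsingleton.elim y x, map_zero]
  | n + 1, p, hp => by
    set q := finSuccEquiv ℝ n p
    obtain ⟨k, hk⟩ : ∃ k, q.coeff k ≠ 0 := by
      by_contra! h
      exact hp ((finSuccEquiv ℝ n).injective (by ext1 k; simp [q, h k]))
    have hslice : ∀ᵐ s : Fin n → ℝ,
        volume {a : ℝ | Polynomial.eval a (q.map (eval s)) = 0} = 0 := by
      filter_upwards [measure_eq_zero_iff_ae_notMem.1 (volume_zeroSet_eq_zero_fin hk)] with s hs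
      have : q.map (eval s) ≠ 0 := fun h ↦
        hs (by simpa using congrArg (Polynomial.coeff · k) h)
      exact (Polynomial.finite_setOfPred_isRoot this).measure_zero _
    set e := MeasurableEquiv.piFinSuccAbove (fun _ : Fin (n + 1) ↦ ℝ) 0
    have hZ : MeasurableSet {x : Fin (n + 1) → ℝ | eval x p = 0} :=
      (continuous_eval p).measurable (measurableSet_singleton 0)
    rw [← (volume_preserving_piFinSuccAbove (fun _ ↦ ℝ) 0).symm.measure_preimage_equiv,
      Measure.volume_eq_prod, Measure.prod_apply_symm (hZ.preimage e.symm.measurable)]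
    refine lintegral_eq_zero_of_ae_eq_zero ?_
    filter_upwards [hslice] with s hs
    rw [Pi.zero_apply, ← hs]
    congr 1 with a
    simp [e, MeasurableEquiv.piFinSuccAbove_symm_apply, Fin.consEquiv, q, eval_eq_eval_mv_eval']

theorem volume_zeroSet_eq_zero {ι : Type*} [Fintype ι] {p : MvPolynomial ι ℝ} (hp : p ≠ 0) :
    volume {x : ι → ℝ | eval x p = 0} = 0 := by
  let e := Fintype.equivFin ι
  have he (y : Fin (Fintype.card ι) → ℝ) :
      MeasurableEquiv.piCongrLeft (fun _ ↦ ℝ) e.symm y = y ∘ e := by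
    ext i
    simp [MeasurableEquiv.coe_piCongrLeft, Equiv.piCongrLeft_apply_eq_cast]
  rw [← (volume_measurePreserving_piCongrLeft (fun _ ↦ ℝ) e.symm).measure_preimage_equiv]
  convert volume_zeroSet_eq_zero_fin ((rename_injective _ e.injective).ne_iff.2 hp) using 3 with y
  simp [he, eval_rename]

end MvPolynomial

theorem MeasureTheory.measurePreserving_curry (ι κ X : Type*) [Fintype ι] [Fintype κ]
    [MeasurableSpace X] (μ : Measure X) [SigmaFinite μ] :
    MeasurePreserving (MeasurableEquiv.curry ι κ X) (Measure.pi fun _ ↦ μ)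
      (Measure.pi fun _ ↦ Measure.pi fun _ ↦ μ) := by
  refine MeasurePreserving.symm _ ⟨(MeasurableEquiv.curry ι κ X).symm.measurable, ?_⟩
  refine (Measure.pi_eq fun s _ ↦ ?_).symm
  have hbox : (MeasurableEquiv.curry ι κ X).symm ⁻¹' Set.univ.pi s =
      Set.univ.pi fun i ↦ Set.univ.pi fun j ↦ s (i, j) := by
    ext f
    simp [MeasurableEquiv.coe_curry_symm, Set.mem_pi]
  rw [MeasurableEquiv.map_apply, hbox, Measure.pi_pi]
  simp_rw [Measure.pi_pi, Fintype.prod_prod_type]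

namespace Matrix

variable {R : Type*} [CommRing R]

def leadingMinor {m k : ℕ} (hk : k ≤ m) (U : Matrix (Fin m) (Fin m) R) : R :=
  (U.submatrix (Fin.castLE hk) (Fin.castLE hk)).det

theorem _root_.RingHom.map_leadingMinor {S : Type*} [CommRing S] (f : R →+* S) {m k : ℕ}
    (hk : k ≤ m) (U : Matrix (Fin m) (Fin m) R) :
    f (leadingMinor hk U) = leadingMinor hk (U.map f) := by
  rw [leadingMinor, leadingMinor, RingHom.map_det, RingHom.mapMatrix_apply, submatrix_map]

theorem le_rank_of_leadingMinor_ne_zero {K : Type*} [Field K] {m k : ℕ} {hk : k ≤ m}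
    {U : Matrix (Fin m) (Fin m) K} (hU : leadingMinor hk U ≠ 0) : k ≤ U.rank := by
  have hunit : IsUnit (U.submatrix (Fin.castLE hk) (Fin.castLE hk)) :=
    (isUnit_iff_isUnit_det _).2 hU.isUnit
  simpa [rank_of_isUnit _ hunit] using rank_submatrix_le U (Fin.castLE hk) (Fin.castLE hk)

end Matrix

section ADBt

variable {R : Type*} [CommRing R] {M N : ℕ}

def adbtMatrix (x : (Fin M → Fin N → R) × (Fin M → Fin N → R) × (Fin N → R)) :
    Matrix (Fin M) (Fin M) R :=
  of x.1 * diagonal x.2.2 * (of x.2.1)ᵀ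

theorem rank_adbtMatrix_le [StrongRankCondition R]
    (x : (Fin M → Fin N → R) × (Fin M → Fin N → R) × (Fin N → R)) :
    (adbtMatrix x).rank ≤ min M N :=
  (rank_mul_le_left _ _).trans <| (rank_mul_le_left _ _).trans <|
    le_min (rank_le_height _) (rank_le_width _)

theorem map_adbtMatrix {S : Type*} [CommRing S] (f : R →+* S)
    (x : (Fin M → Fin N → R) × (Fin M → Fin N → R) × (Fin N → R)) :
    (adbtMatrix x).map f =
      adbtMatrix (fun i j ↦ f (x.1 i j), fun i j ↦ f (x.2.1 i j), f ∘ x.2.2) := by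
  simp only [adbtMatrix, Matrix.map_mul, transpose_map, diagonal_map (map_zero f)]
  rfl

theorem leadingMinor_adbtMatrix_eq_one (A : Fin M → Fin N → R)
    (hA : ∀ i j, A (Fin.castLE (min_le_left M N) i) j =
      if Fin.castLE (min_le_right M N) i = j then 1 else 0) :
    leadingMinor (min_le_left M N) (adbtMatrix (A, A, 1)) = 1 := by
  rw [leadingMinor, ← det_one (n := Fin (min M N)) (R := R)]
  congr 1
  ext i i'
  simp [adbtMatrix, mul_apply, hA, one_apply]

end ADBt

/-- The `2MN + N` coordinates: the entries of `A`, of `B`, and the diagonal of `D`. -/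
abbrev ADBtCoords (M N : ℕ) := (Fin M × Fin N) ⊕ ((Fin M × Fin N) ⊕ Fin N)

def unpackADBtCoords {R : Type*} {M N : ℕ} (y : ADBtCoords M N → R) :
    (Fin M → Fin N → R) × (Fin M → Fin N → R) × (Fin N → R) :=
  (fun i j ↦ y (.inl (i, j)), fun i j ↦ y (.inr (.inl (i, j))),
    fun j ↦ y (.inr (.inr j)))

def ADBtCoords.measurableEquiv (M N : ℕ) :
    (ADBtCoords M N → ℝ) ≃ᵐ (Fin M → Fin N → ℝ) × (Fin M → Fin N → ℝ) × (Fin N → ℝ) :=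
  open MeasurableEquiv in
  (sumPiEquivProdPi _).trans <| prodCongr (curry _ _ _) <|
    (sumPiEquivProdPi _).trans <| prodCongr (curry _ _ _) (refl _)

theorem ADBtCoords.coe_measurableEquiv (M N : ℕ) :
    ⇑(ADBtCoords.measurableEquiv M N) = unpackADBtCoords :=
  rfl

theorem ADBtCoords.measurePreserving_measurableEquiv (M N : ℕ) :
    MeasurePreserving (ADBtCoords.measurableEquiv M N) := by
  refine ((measurePreserving_curry _ _ _ _).prod ?_).comp
    (volume_measurePreserving_sumPiEquivProdPi _)
  exact ((measurePreserving_curry _ _ _ _).prod (.id _)).comp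
    (volume_measurePreserving_sumPiEquivProdPi _)

noncomputable def leadingMinorADBtPoly (M N : ℕ) : MvPolynomial (ADBtCoords M N) ℝ :=
  leadingMinor (min_le_left M N) (adbtMatrix (unpackADBtCoords MvPolynomial.X))

theorem eval_leadingMinorADBtPoly {M N : ℕ} (y : ADBtCoords M N → ℝ) :
    MvPolynomial.eval y (leadingMinorADBtPoly M N) =
      leadingMinor (min_le_left M N) (adbtMatrix (unpackADBtCoords y)) := by
  rw [leadingMinorADBtPoly, RingHom.map_leadingMinor, map_adbtMatrix]
  simp [unpackADBtCoords, Function.comp_def]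

theorem leadingMinorADBtPoly_ne_zero (M N : ℕ) : leadingMinorADBtPoly M N ≠ 0 := by
  let A : Fin M → Fin N → ℝ := fun i j ↦ if (i : ℕ) = j then 1 else 0
  have hA := leadingMinor_adbtMatrix_eq_one A fun i j ↦ by simp [A, Fin.ext_iff]
  intro h
  have := eval_leadingMinorADBtPoly ((ADBtCoords.measurableEquiv M N).symm (A, A, 1))
  rw [h, map_zero, ← ADBtCoords.coe_measurableEquiv, MeasurableEquiv.apply_symm_apply, hA]
    at this
  exact zero_ne_one this

/-- For the mapping `x ↦ U(x) := A(x) · D(x) · B(x)ᵀ`, where `A(x), B(x)` are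
the `M × N` matrices holding the first and second `M·N` entries of `x` and `D(x)` is the
`N × N` diagonal matrix holding the last `N` entries, the set of points `x` for which
`rank (U x) ≠ min M N` has Lebesgue measure zero. -/
theorem rank_ADBt_eq_min_almost_everywhere (M N : ℕ) :
    volume {x : (Fin M → Fin N → ℝ) × (Fin M → Fin N → ℝ) × (Fin N → ℝ) |
      (Matrix.of x.1 * Matrix.diagonal x.2.2 * (Matrix.of x.2.1).transpose).rank ≠ min M N} = 0 := by
  have hsub : ADBtCoords.measurableEquiv M N ⁻¹' {x | (adbtMatrix x).rank ≠ min M N} ⊆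
      {y | MvPolynomial.eval y (leadingMinorADBtPoly M N) = 0} := by
    intro y hy
    by_contra hminor
    rw [Set.mem_ofPred_eq, eval_leadingMinorADBtPoly] at hminor
    exact hy (le_antisymm (rank_adbtMatrix_le _) (le_rank_of_leadingMinor_ne_zero hminor))
  rw [← (ADBtCoords.measurePreserving_measurableEquiv M N).measure_preimage_equiv]
  exact measure_mono_null hsub
    (MvPolynomial.volume_zeroSet_eq_zero (leadingMinorADBtPoly_ne_zero M N))
end

section
/- Let x ∈ ℝ^{MN+N}, with A(x) ∈ ℝ^{M×N} holding the first MN entries and D(x) ∈ ℝ^{N×N} diagonal with the last N entries. Then the set of x for which rank(A(x)·D(x)·A(x)ᵀ) ≠ min{M,N} has Lebesgue measure zero. -/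
/-!
The rank of `A D Aᵀ` never exceeds `k = min M N`, and it equals `k` as soon as the leading
principal `k × k` minor of `A D Aᵀ` is nonzero. This minor is a polynomial in the `MN + N`
entries of `A` and `D`, and it is not the zero polynomial since it equals `1` at `A = [I 0]`
(or `[I; 0]`), `D = I`. The zero set of a nonzero real polynomial is Lebesgue-null: by
induction on the number of variables and Fubini, for almost every value of all variables but
one, the leading coefficient in the remaining one does not vanish, leaving finitely many roots.
-/

open MeasureTheory

theorem measurePreserving_curry_symm {ι κ X : Type*} [Fintype ι] [Fintype κ]
    [MeasurableSpace X] (μ : Measure X) [SigmaFinite μ] :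
    MeasurePreserving (MeasurableEquiv.curry ι κ X).symm
      (Measure.pi fun _ ↦ Measure.pi fun _ ↦ μ) (Measure.pi fun _ ↦ μ) := by
  refine ⟨MeasurableEquiv.measurable _, (Measure.pi_eq fun s hs ↦ ?_).symm⟩
  rw [MeasurableEquiv.map_apply, MeasurableEquiv.coe_curry_symm,
    show Function.uncurry ⁻¹' Set.univ.pi s =
      Set.univ.pi fun i ↦ Set.univ.pi fun j ↦ s (i, j) by ext; simp [Set.mem_pi]]
  simp_rw [Measure.pi_pi, ← Finset.prod_product', Finset.univ_product_univ]

theorem volume_measurePreserving_sumElim_uncurry (ι κ ν : Type*) [Fintype ι] [Fintype κ]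
    [Fintype ν] :
    MeasurePreserving
      (fun x : (ι → κ → ℝ) × (ν → ℝ) ↦ Sum.elim (fun p : ι × κ ↦ x.1 p.1 p.2) x.2)
      volume volume :=
  (volume_measurePreserving_sumPiEquivProdPi_symm fun _ ↦ ℝ).comp
    ((measurePreserving_curry_symm volume).prod (.id volume))

theorem volume_measurePreserving_piOptionEquivProd_symm (ι : Type*) [Fintype ι] :
    MeasurePreserving (MeasurableEquiv.piOptionEquivProd fun _ : Option ι ↦ ℝ).symm
      ((volume : Measure (ι → ℝ)).prod volume) volume :=
  ⟨MeasurableEquiv.measurable _, by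
    simpa only [← volume_pi] using Measure.pi_map_piOptionEquivProd fun _ : Option ι ↦ volume⟩

namespace MvPolynomial

theorem measurableSet_setOf_eval_eq_zero {σ : Type*} [Fintype σ] (p : MvPolynomial σ ℝ) :
    MeasurableSet {x : σ → ℝ | eval x p = 0} :=
  (isClosed_eq (continuous_eval p) continuous_const).measurableSet

theorem volume_setOf_eval_rename {σ τ : Type*} [Fintype σ] [Fintype τ] (e : σ ≃ τ)
    (p : MvPolynomial σ ℝ) :
    volume {x : τ → ℝ | eval x (rename e p) = 0} = volume {x : σ → ℝ | eval x p = 0} := by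
  rw [← (volume_measurePreserving_piCongrLeft (fun _ ↦ ℝ) e).symm.measure_preimage_equiv]
  congr 1
  ext x
  simp only [eval_rename, Function.comp_def]
  rfl

theorem volume_setOf_eval_eq_zero_of_isEmpty {σ : Type*} [Fintype σ] [IsEmpty σ]
    {p : MvPolynomial σ ℝ} (hp : p ≠ 0) : volume {x : σ → ℝ | eval x p = 0} = 0 := by
  obtain ⟨c, rfl⟩ := C_surjective σ p
  simp_all

theorem volume_setOf_eval_eq_zero_option {σ : Type*} [Fintype σ]
    (ih : ∀ q : MvPolynomial σ ℝ, q ≠ 0 → volume {y : σ → ℝ | eval y q = 0} = 0)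
    {p : MvPolynomial (Option σ) ℝ} (hp : p ≠ 0) :
    volume {x : Option σ → ℝ | eval x p = 0} = 0 := by
  set e := MeasurableEquiv.piOptionEquivProd fun _ : Option σ ↦ ℝ
  set q := optionEquivLeft ℝ σ p
  have hq : q.leadingCoeff ≠ 0 := by simpa [q] using hp
  have hsection (y : σ → ℝ) :
      Prod.mk y ⁻¹' (e.symm ⁻¹' {x | eval x p = 0}) = {t | (q.map (eval y)).IsRoot t} := by
    ext t
    have he : e.symm (y, t) = fun o ↦ o.elim t y := by
      ext (_ | _) <;> rfl
    simp [he, q, optionEquivLeft_elim_eval]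
  rw [← (volume_measurePreserving_piOptionEquivProd_symm σ).measure_preimage_equiv,
    Measure.measure_prod_null (e.symm.measurable (measurableSet_setOf_eval_eq_zero p))]
  have hleading : ∀ᵐ y : σ → ℝ, eval y q.leadingCoeff ≠ 0 := by
    simpa [ae_iff] using ih _ hq
  filter_upwards [hleading] with y hy
  have hmap : q.map (eval y) ≠ 0 := Polynomial.leadingCoeff_ne_zero.mp <| by
    rwa [Polynomial.leadingCoeff_map_of_leadingCoeff_ne_zero _ hy]
  exact (hsection y).symm ▸ (Polynomial.finite_setOfPred_isRoot hmap).measure_zero _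

theorem volume_setOf_eval_eq_zero {σ : Type*} [Fintype σ] {p : MvPolynomial σ ℝ} (hp : p ≠ 0) :
    volume {x : σ → ℝ | eval x p = 0} = 0 := by
  refine Fintype.induction_empty_option
    (P := fun σ _ ↦ ∀ p : MvPolynomial σ ℝ, p ≠ 0 → volume {x : σ → ℝ | eval x p = 0} = 0)
    (fun α β _ e ih q hq ↦ ?_) (fun _ ↦ volume_setOf_eval_eq_zero_of_isEmpty)
    (fun α _ ih _ ↦ volume_setOf_eval_eq_zero_option ih) σ p hp
  let := Fintype.ofEquiv β e.symm
  obtain ⟨q, rfl⟩ := (renameEquiv ℝ e).surjective q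
  rw [renameEquiv_apply, volume_setOf_eval_rename]
  exact ih q fun h ↦ hq (by simp [h])

end MvPolynomial

namespace Matrix

open MvPolynomial

theorem rank_mul_le_min_card {m n o R : Type*} [Fintype m] [Fintype n] [Fintype o] [CommRing R]
    [StrongRankCondition R] (A : Matrix m n R) (B : Matrix n o R) :
    (A * B).rank ≤ min (Fintype.card m) (Fintype.card n) :=
  le_min ((rank_mul_le_left A B).trans A.rank_le_card_height)
    ((rank_mul_le_left A B).trans A.rank_le_card_width)

theorem card_le_rank_of_det_submatrix_ne_zero {m n o K : Type*} [Fintype n] [Fintype o]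
    [DecidableEq o] [Field K] (A : Matrix m n K) (r : o → m) (c : o → n)
    (h : (A.submatrix r c).det ≠ 0) : Fintype.card o ≤ A.rank :=
  calc Fintype.card o = (A.submatrix r c).rank := by
        rw [rank_of_isUnit _ ((isUnit_iff_isUnit_det _).mpr h.isUnit)]
    _ ≤ A.rank := rank_submatrix_le A r c

noncomputable def mvPolynomialADAt (m n R : Type*) [Fintype n] [DecidableEq n] [CommSemiring R] :
    Matrix m m (MvPolynomial ((m × n) ⊕ n) R) :=
  let A : Matrix m n (MvPolynomial ((m × n) ⊕ n) R) := of fun i j ↦ X (Sum.inl (i, j))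
  A * diagonal (fun j ↦ (X (Sum.inr j) : MvPolynomial ((m × n) ⊕ n) R)) * Aᵀ

theorem eval_det_submatrix_mvPolynomialADAt {m n o R : Type*} [Fintype n] [DecidableEq n]
    [Fintype o] [DecidableEq o] [CommRing R] (a : m → n → R) (d : n → R) (r c : o → m) :
    eval (Sum.elim (fun p ↦ a p.1 p.2) d) ((mvPolynomialADAt m n R).submatrix r c).det =
      ((of a * diagonal d * (of a)ᵀ).submatrix r c).det := by
  have hA : (of fun i j ↦ X (Sum.inl (i, j)) : Matrix m n (MvPolynomial ((m × n) ⊕ n) R)).map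
      (eval (Sum.elim (fun p ↦ a p.1 p.2) d)) = of a := by
    ext; simp
  rw [RingHom.map_det, RingHom.mapMatrix_apply, ← submatrix_map, mvPolynomialADAt,
    Matrix.map_mul, Matrix.map_mul, transpose_map, diagonal_map (map_zero _), hA]
  simp

theorem det_submatrix_castLE_mvPolynomialADAt_ne_zero {R : Type*} [CommRing R] [Nontrivial R]
    {M N k : ℕ} (hM : k ≤ M) (hN : k ≤ N) :
    ((mvPolynomialADAt (Fin M) (Fin N) R).submatrix (Fin.castLE hM) (Fin.castLE hM)).det ≠ 0 := by
  set a₀ : Fin M → Fin N → R := fun i j ↦ if (i : ℕ) = j then 1 else 0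
  have ha₀ : ((of a₀ * (of a₀)ᵀ).submatrix (Fin.castLE hM) (Fin.castLE hM)) = 1 := by
    have hval (a : Fin k) (j : Fin N) : (a : ℕ) = j ↔ Fin.castLE hN a = j := by
      simp [Fin.ext_iff]
    ext a b
    simp [a₀, mul_apply, hval, one_apply]
  intro h
  have := congrArg (eval (Sum.elim (fun p ↦ a₀ p.1 p.2) fun _ ↦ 1)) h
  rw [eval_det_submatrix_mvPolynomialADAt, diagonal_one, Matrix.mul_one, ha₀, det_one] at this
  simp at this

end Matrix

/-- The "shared" variant of the `A·D·Bᵀ` rank lemma, with `B(x) = A(x)`: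
for `x ∈ ℝ^{MN+N}` with `A(x)` the `M × N` matrix of the first `M·N` entries and `D(x)`
diagonal with the last `N` entries, the set of `x` with
`rank (A(x) · D(x) · A(x)ᵀ) ≠ min M N` has Lebesgue measure zero. -/
theorem rank_ADAt_eq_min_almost_everywhere (M N : ℕ) :
    volume {x : (Fin M → Fin N → ℝ) × (Fin N → ℝ) |
      (Matrix.of x.1 * Matrix.diagonal x.2 * (Matrix.of x.1).transpose).rank ≠ min M N} = 0 := by
  set r := Fin.castLE (min_le_left M N)
  set p := ((Matrix.mvPolynomialADAt (Fin M) (Fin N) ℝ).submatrix r r).det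
  have hp : p ≠ 0 := Matrix.det_submatrix_castLE_mvPolynomialADAt_ne_zero _ (min_le_right M N)
  have hnull : volume ((fun x : (Fin M → Fin N → ℝ) × (Fin N → ℝ) ↦
      Sum.elim (fun ij ↦ x.1 ij.1 ij.2) x.2) ⁻¹' {y | MvPolynomial.eval y p = 0}) = 0 := by
    rw [(volume_measurePreserving_sumElim_uncurry _ _ _).measure_preimage
      (MvPolynomial.measurableSet_setOf_eval_eq_zero p).nullMeasurableSet]
    exact MvPolynomial.volume_setOf_eval_eq_zero hp
  refine measure_mono_null (fun x hx ↦ ?_) hnull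
  by_contra hminor
  have hdet : ((Matrix.of x.1 * Matrix.diagonal x.2 * (Matrix.of x.1).transpose).submatrix
      r r).det ≠ 0 := by
    simpa [p, Matrix.eval_det_submatrix_mvPolynomialADAt] using hminor
  refine hx (le_antisymm ?_ ?_)
  · simpa using
      Matrix.rank_mul_le_min_card (Matrix.of x.1 * Matrix.diagonal x.2) (Matrix.of x.1).transpose
  · simpa using Matrix.card_le_rank_of_det_submatrix_ne_zero _ r r hdet
end

section
/- Let A₁,…,A_p : ℝ^d → ℝ^{M×N} be continuous mappings such that the set of points y ∈ ℝ^d with rank(Aᵢ(y)) < r for all i ∈ [p] has Lebesgue measure zero. Define A(x,y) := Σᵢ₌₁^p xᵢ·Aᵢ(y) for (x,y) ∈ ℝ^p × ℝ^d. Then the set of points (x,y) for which rank(A(x,y)) < r has Lebesgue measure zero. -/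
/-!
The condition `rank < r` is the vanishing of all `r × r` minors, so it cuts out a closed set and
Fubini applies with fibres over `y`. Off the null set where every `Aᵢ y` has rank `< r`, some
`Aᵢ y` has a nonzero `r × r` minor. The same minor of `∑ j, xⱼ • Aⱼ y` is a polynomial in `x`
which is nonzero, since at `x = eᵢ` it is that minor of `Aᵢ y`; and the zero set of a nonzero real
polynomial is Lebesgue-null (induction on the number of variables, again by Fubini).
-/

open MeasureTheory Matrix

theorem exists_linearIndependent_comp_of_le_finrank_span {K V ι : Type*} [DivisionRing K]
    [AddCommGroup V] [Module K V] [Finite ι] (v : ι → V) {r : ℕ}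
    (h : r ≤ Module.finrank K (Submodule.span K (Set.range v))) :
    ∃ f : Fin r → ι, LinearIndependent K (v ∘ f) := by
  obtain ⟨κ, a, ha, hspan, hli⟩ := exists_linearIndependent' K v
  have : Finite κ := .of_injective a ha
  have : Fintype κ := Fintype.ofFinite κ
  have hcard : r ≤ Fintype.card κ := by
    rwa [← hspan, finrank_span_eq_card hli] at h
  obtain ⟨e⟩ : Nonempty (Fin r ↪ κ) :=
    Function.Embedding.nonempty_of_card_le (by simpa using hcard)
  exact ⟨a ∘ e, hli.comp e e.injective⟩

namespace Matrix

variable {K m n : Type*} [Field K] [Fintype n]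

theorem exists_submatrix_det_ne_zero_of_le_rank [Finite m] {A : Matrix m n K} {r : ℕ}
    (h : r ≤ A.rank) :
    ∃ (f : Fin r → m) (g : Fin r → n), (A.submatrix f g).det ≠ 0 := by
  rw [rank_eq_finrank_span_row] at h
  obtain ⟨f, hf⟩ := exists_linearIndependent_comp_of_le_finrank_span A.row h
  have hrows : r ≤ (A.submatrix f id).rank := by
    rw [LinearIndependent.rank_matrix (M := A.submatrix f id) hf, Fintype.card_fin]
  rw [rank_eq_finrank_span_cols] at hrows
  obtain ⟨g, hg⟩ := exists_linearIndependent_comp_of_le_finrank_span _ hrows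
  exact ⟨f, g, (isUnit_iff_isUnit_det _).mp (linearIndependent_cols_iff_isUnit.mp hg) |>.ne_zero⟩

theorem le_rank_of_submatrix_det_ne_zero {A : Matrix m n K} {r : ℕ} {f : Fin r → m}
    {g : Fin r → n} (h : (A.submatrix f g).det ≠ 0) : r ≤ A.rank := by
  simpa [rank_of_det_ne_zero h] using rank_submatrix_le A f g

theorem rank_lt_iff_forall_submatrix_det_eq_zero [Finite m] {A : Matrix m n K} {r : ℕ} :
    A.rank < r ↔ ∀ (f : Fin r → m) (g : Fin r → n), (A.submatrix f g).det = 0 := by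
  refine ⟨fun h f g => ?_, fun h => ?_⟩
  · by_contra hfg
    exact (le_rank_of_submatrix_det_ne_zero hfg).not_gt h
  · by_contra hr
    obtain ⟨f, g, hfg⟩ := exists_submatrix_det_ne_zero_of_le_rank (not_lt.mp hr)
    exact hfg (h f g)

theorem isClosed_setOf_rank_lt [Finite m] [TopologicalSpace K] [IsTopologicalRing K] [T1Space K]
    {X : Type*} [TopologicalSpace X] {F : X → Matrix m n K} (hF : Continuous F) (r : ℕ) :
    IsClosed {x | (F x).rank < r} := by
  simp only [rank_lt_iff_forall_submatrix_det_eq_zero, Set.ofPred_forall]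
  exact isClosed_iInter fun f => isClosed_iInter fun g =>
    isClosed_eq (hF.matrix_submatrix f g).matrix_det continuous_const

end Matrix

theorem MeasureTheory.Measure.prod_null_of_ae_null_snd {α β : Type*} [MeasurableSpace α]
    [MeasurableSpace β] {μ : Measure α} {ν : Measure β} [SFinite μ] [SFinite ν]
    {s : Set (α × β)} (hs : MeasurableSet s)
    (h : ∀ᵐ y ∂ν, μ {x | (x, y) ∈ s} = 0) : μ.prod ν s = 0 := by
  rw [← Measure.prod_swap, Measure.map_apply measurable_swap hs]
  exact Measure.measure_prod_null_of_ae_null (measurable_swap hs) h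

theorem MvPolynomial.volume_setOf_eval_eq_zero_s8 :
    ∀ {n : ℕ} {P : MvPolynomial (Fin n) ℝ}, P ≠ 0 → volume {x | eval x P = 0} = 0
  | 0, P, hP => by
    obtain ⟨a, rfl⟩ := C_surjective (Fin 0) P
    simp_all
  | n + 1, P, hP => by
    set Q := finSuccEquiv ℝ n P
    obtain ⟨k, hk⟩ : ∃ k, Q.coeff k ≠ 0 := by
      by_contra! h
      exact hP ((finSuccEquiv ℝ n).injective (Polynomial.ext fun k => by simp [Q, h k]))
    have hZ : MeasurableSet {x : Fin (n + 1) → ℝ | eval x P = 0} :=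
      (isClosed_eq P.continuous_eval continuous_const).measurableSet
    have hmp := (volume_preserving_piFinSuccAbove (fun _ : Fin (n + 1) => ℝ) 0).symm
    rw [← hmp.measure_preimage_equiv, Measure.volume_eq_prod]
    refine Measure.prod_null_of_ae_null_snd (hmp.measurable hZ) ?_
    filter_upwards [measure_eq_zero_iff_ae_notMem.mp (volume_setOf_eval_eq_zero_s8 hk)] with s hs
    have hQs : Q.map (eval s) ≠ 0 := fun h0 => hs (by
      simpa [Polynomial.coeff_map] using congrArg (Polynomial.coeff · k) h0)
    refine measure_mono_null (fun a ha => ?_)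
      ((Polynomial.finite_setOfPred_isRoot hQs).measure_zero _)
    simp only [Set.mem_ofPred_eq, Set.mem_preimage, MeasurableEquiv.piFinSuccAbove_symm_apply,
      Fin.insertNthEquiv_zero] at ha
    change eval (Fin.cons a s) P = 0 at ha
    rwa [eval_eq_eval_mv_eval'] at ha

theorem volume_setOf_det_sum_smul_eq_zero {p : ℕ} {n : Type*} [Fintype n] [DecidableEq n]
    (B : Fin p → Matrix n n ℝ) {i : Fin p} (hi : (B i).det ≠ 0) :
    volume {x : Fin p → ℝ | (∑ j, x j • B j).det = 0} = 0 := by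
  set P : MvPolynomial (Fin p) ℝ :=
    (∑ j, (MvPolynomial.X j : MvPolynomial (Fin p) ℝ) • (B j).map MvPolynomial.C).det
  have hP : ∀ x, MvPolynomial.eval x P = (∑ j, x j • B j).det := fun x => by
    rw [RingHom.map_det]
    congr 1
    ext a b
    simp [Matrix.sum_apply]
  have hPi : MvPolynomial.eval (Pi.single i 1) P = (B i).det := by
    simp [hP, Pi.single_apply]
  have hP0 : P ≠ 0 := fun h0 => hi (by rw [← hPi, h0, map_zero])
  simpa [hP] using MvPolynomial.volume_setOf_eval_eq_zero_s8 hP0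

theorem volume_setOf_rank_sum_smul_lt {p r : ℕ} {m n : Type*} [Fintype m] [Fintype n]
    (B : Fin p → Matrix m n ℝ) {i : Fin p} (hi : r ≤ (B i).rank) :
    volume {x : Fin p → ℝ | (∑ j, x j • B j).rank < r} = 0 := by
  obtain ⟨f, g, hfg⟩ := exists_submatrix_det_ne_zero_of_le_rank hi
  refine measure_mono_null (fun x hx => ?_)
    (volume_setOf_det_sum_smul_eq_zero (fun j => (B j).submatrix f g) hfg)
  have hsub : (∑ j, x j • B j).submatrix f g = ∑ j, x j • (B j).submatrix f g := by
    ext; simp [Matrix.sum_apply]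
  simpa [hsub] using rank_lt_iff_forall_submatrix_det_eq_zero.mp hx f g

/-- Let `A₁, …, A_p : ℝ^d → ℝ^{M×N}` be continuous mappings such that the set
of `y` with `rank (Aᵢ y) < r` for all `i` has Lebesgue measure zero.  Then the set of points
`(x, y)` for which `rank (∑ i, xᵢ • Aᵢ y) < r` has Lebesgue measure zero. -/
theorem rank_linear_combination_almost_everywhere (p d M N r : ℕ)
    (A : Fin p → (Fin d → ℝ) → Matrix (Fin M) (Fin N) ℝ)
    (hcont : ∀ i, Continuous (A i))
    (hzero : volume {y : Fin d → ℝ | ∀ i, (A i y).rank < r} = 0) :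
    volume {xy : (Fin p → ℝ) × (Fin d → ℝ) |
      (∑ i, xy.1 i • A i xy.2).rank < r} = 0 := by
  have hclosed : IsClosed {xy : (Fin p → ℝ) × (Fin d → ℝ) | (∑ i, xy.1 i • A i xy.2).rank < r} :=
    isClosed_setOf_rank_lt (by fun_prop) r
  rw [Measure.volume_eq_prod]
  refine Measure.prod_null_of_ae_null_snd hclosed.measurableSet ?_
  filter_upwards [measure_eq_zero_iff_ae_notMem.mp hzero] with y hy
  obtain ⟨i, hi⟩ : ∃ i, r ≤ (A i y).rank := by simpa using hy
  exact volume_setOf_rank_sum_smul_lt (fun j => A j y) hi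
end

section
/- Let f₁,…,f_M ∈ L²(ℝ^s) be linearly independent, let 𝒯 be the space of order-N tensors with dimension M in each mode, and for A ∈ 𝒯 define h(A)(x₁,…,x_N) := Σ_{d₁…d_N} A_{d₁…d_N} ∏ᵢ f_{d_i}(x_i). If {A^λ}_{λ∈Λ} ⊂ 𝒯 is a family of tensors and A* a target tensor with rank([A^λ]) < rank([A*]) for all λ, then there exists ε > 0 such that ∫|h(A^λ) − h(A*)|² > ε for all λ ∈ Λ, i.e. h(A*) is bounded away from the family {h(A^λ)} in L². -/
/-!
The map `B ↦ h(B)` is linear and, by the linear independence of the product functions,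
injective on the finite-dimensional space of tensors; hence `‖h(B)‖²_{L²} ≥ c ‖B‖²` for some
`c > 0`. Since rank is lower semicontinuous, the tensors whose matricization has rank below
`rank [A*]` form a closed set avoiding `A*`, so they lie at some distance `δ > 0` from `A*`, and
`‖h(A^λ) - h(A*)‖² ≥ c δ²` for all `λ`.
-/

open MeasureTheory

/-- Matricization of an even-order tensor: odd modes (1-indexed) to rows, even modes to columns. -/
def matricize {n : ℕ} {Md : Fin (2 * n) → ℕ} (A : (∀ i, Fin (Md i)) → ℝ) :
    Matrix (∀ j : Fin n, Fin (Md ⟨2 * j.1, by omega⟩))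
           (∀ j : Fin n, Fin (Md ⟨2 * j.1 + 1, by omega⟩)) ℝ :=
  fun row col => A fun i =>
    if h : i.1 % 2 = 0 then
      Fin.cast (congrArg Md (show (⟨2 * (i.1 / 2), by omega⟩ : Fin (2 * n)) = i from Fin.ext (by simp only [Fin.val_mk]; omega)))
        (row ⟨i.1 / 2, by omega⟩)
    else
      Fin.cast (congrArg Md (show (⟨2 * (i.1 / 2) + 1, by omega⟩ : Fin (2 * n)) = i from Fin.ext (by simp only [Fin.val_mk]; omega)))
        (col ⟨i.1 / 2, by omega⟩)

namespace Matrix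

variable {𝕜 m n : Type*} [NontriviallyNormedField 𝕜] [CompleteSpace 𝕜] [Fintype m] [Fintype n]

theorem isOpen_setOf_le_rank (k : ℕ) : IsOpen {A : Matrix m n 𝕜 | k ≤ A.rank} := by
  classical
  let toCLM : Matrix m n 𝕜 →ₗ[𝕜] (n → 𝕜) →L[𝕜] (m → 𝕜) :=
    LinearMap.toContinuousLinearMap.toLinearMap ∘ₗ toLin'.toLinearMap
  convert (isOpen_setOfPred_nat_le_rank k).preimage toCLM.continuous_of_finiteDimensional using 1
  ext A
  simp only [Set.mem_ofPred_eq, Set.preimage_ofPred_eq, rank, ← Module.finrank_eq_rank,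
    Nat.cast_le]
  rfl

theorem isClosed_setOf_rank_lt_s17 (k : ℕ) : IsClosed {A : Matrix m n 𝕜 | A.rank < k} := by
  simpa only [Set.compl_ofPred, not_le] using (isOpen_setOf_le_rank k).isClosed_compl

end Matrix

theorem continuous_matricize {n : ℕ} {Md : Fin (2 * n) → ℕ} :
    Continuous (matricize (n := n) (Md := Md)) :=
  continuous_pi fun _ => continuous_pi fun _ => continuous_apply _

/-- Take for `c` the minimum of `Q` over the compact unit sphere. -/
theorem exists_pos_mul_norm_sq_le {E : Type*} [NormedAddCommGroup E] [NormedSpace ℝ E]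
    [FiniteDimensional ℝ E] {Q : E → ℝ} (hQ : Continuous Q)
    (hsmul : ∀ (t : ℝ) x, Q (t • x) = t ^ 2 * Q x) (hpos : ∀ x ≠ 0, 0 < Q x) :
    ∃ c > 0, ∀ x, c * ‖x‖ ^ 2 ≤ Q x := by
  rcases subsingleton_or_nontrivial E with hE | hE
  · refine ⟨1, one_pos, fun x => ?_⟩
    simpa [Subsingleton.elim x 0] using (hsmul 0 0).ge
  obtain ⟨u, hu, hmin⟩ := (isCompact_sphere (0 : E) 1).exists_isMinOn
    (NormedSpace.sphere_nonempty.2 zero_le_one) hQ.continuousOn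
  have hu1 : ‖u‖ = 1 := mem_sphere_zero_iff_norm.1 hu
  refine ⟨Q u, hpos u (ne_zero_of_norm_ne_zero (by simp [hu1])), fun x => ?_⟩
  rcases eq_or_ne x 0 with rfl | hx
  · simpa using (hsmul 0 0).ge
  have hx' : ‖x‖ ≠ 0 := norm_ne_zero_iff.2 hx
  have hmem : ‖x‖⁻¹ • x ∈ Metric.sphere (0 : E) 1 := by
    rw [mem_sphere_zero_iff_norm, norm_smul, norm_inv, norm_norm, inv_mul_cancel₀ hx']
  calc Q u * ‖x‖ ^ 2 ≤ Q (‖x‖⁻¹ • x) * ‖x‖ ^ 2 := by gcongr; exact hmin hmem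
    _ = Q x := by rw [hsmul]; field_simp

theorem integrable_prod_mul_of_memLp {α κ : Type*} [MeasurableSpace α] {μ : Measure α}
    [SigmaFinite μ] [Fintype κ] {g h : κ → α → ℝ} (hg : ∀ i, MemLp (g i) 2 μ)
    (hh : ∀ i, MemLp (h i) 2 μ) :
    Integrable (fun X : κ → α => ∏ i, g i (X i) * h i (X i)) (Measure.pi fun _ => μ) :=
  Integrable.fintype_prod (f := fun i x => g i x * h i x) fun i => (hg i).integrable_mul (hh i)

section TensorFun

variable {α ι : Type*} [Fintype ι] {N : ℕ}

def tensorFun (f : ι → α → ℝ) (B : (Fin N → ι) → ℝ) (X : Fin N → α) : ℝ :=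
  ∑ d, B d * ∏ i, f (d i) (X i)

variable {f : ι → α → ℝ}

theorem tensorFun_sub (A B : (Fin N → ι) → ℝ) (X : Fin N → α) :
    tensorFun f (A - B) X = tensorFun f A X - tensorFun f B X := by
  simp only [tensorFun, Pi.sub_apply, sub_mul, Finset.sum_sub_distrib]

theorem tensorFun_cons (B : (Fin (N + 1) → ι) → ℝ) (y : α) (Z : Fin N → α) :
    tensorFun f B (Fin.cons y Z) = ∑ j, tensorFun f (fun e => B (Fin.cons j e)) Z * f j y := by
  rw [tensorFun, ← (Fin.consEquiv fun _ => ι).sum_comp, Fintype.sum_prod_type]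
  refine Finset.sum_congr rfl fun j _ => ?_
  simp only [tensorFun, Finset.sum_mul]
  refine Finset.sum_congr rfl fun e _ => ?_
  simp only [Fin.consEquiv, Equiv.coe_fn_mk, Fin.prod_univ_succ, Fin.cons_zero, Fin.cons_succ]
  ring

theorem sq_tensorFun (B : (Fin N → ι) → ℝ) (X : Fin N → α) :
    tensorFun f B X ^ 2 =
      ∑ d, ∑ d', B d * B d' * ∏ i, (f (d i) (X i) * f (d' i) (X i)) := by
  rw [tensorFun, sq, Finset.sum_mul_sum]
  refine Finset.sum_congr rfl fun d _ => Finset.sum_congr rfl fun d' _ => ?_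
  rw [Finset.prod_mul_distrib]
  ring

variable [MeasurableSpace α] {μ : Measure α}

/-- `‖tensorFun f B‖²` in `L²(μ^N)` (see `integral_sq_tensorFun`), written out as a polynomial
in `B` so that it is visibly continuous. -/
noncomputable def gramForm (μ : Measure α) (f : ι → α → ℝ) (B : (Fin N → ι) → ℝ) : ℝ :=
  ∑ d, ∑ d', B d * B d' * ∏ i, ∫ x, f (d i) x * f (d' i) x ∂μ

theorem gramForm_smul (t : ℝ) (B : (Fin N → ι) → ℝ) :
    gramForm μ f (t • B) = t ^ 2 * gramForm μ f B := by
  simp only [gramForm, Pi.smul_apply, smul_eq_mul, Finset.mul_sum]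
  refine Finset.sum_congr rfl fun d _ => Finset.sum_congr rfl fun d' _ => ?_
  ring

theorem continuous_gramForm : Continuous (gramForm (N := N) μ f) := by
  unfold gramForm
  fun_prop

variable [SigmaFinite μ]

/-- Induction on `N`: by Fubini, almost every slice in the first variable is a combination of the
`f j` that vanishes almost everywhere. -/
theorem eq_zero_of_tensorFun_ae_eq_zero
    (hind : ∀ c : ι → ℝ, (∀ᵐ x ∂μ, ∑ j, c j * f j x = 0) → c = 0) :
    ∀ {N : ℕ} (B : (Fin N → ι) → ℝ),
      (∀ᵐ X ∂Measure.pi fun _ : Fin N => μ, tensorFun f B X = 0) → B = 0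
  | 0, B, hB => by
    rw [Measure.pi_of_empty] at hB
    obtain ⟨X, hX⟩ := hB.exists
    funext d
    simpa [tensorFun, Subsingleton.elim _ d] using hX
  | N + 1, B, hB => by
    have hcons : ∀ᵐ q ∂(Measure.pi fun _ : Fin N => μ).prod μ,
        tensorFun f B (Fin.cons q.2 q.1) = 0 :=
      (((measurePreserving_piFinSuccAbove (fun _ => μ) 0).symm _).comp
        Measure.measurePreserving_swap).quasiMeasurePreserving.ae hB |>.mono fun q hq => by
        simpa [MeasurableEquiv.piFinSuccAbove_symm_apply, Fin.insertNth_zero, Fin.consEquiv]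
          using hq
    have hslices : ∀ᵐ Z ∂Measure.pi fun _ : Fin N => μ,
        ∀ j, tensorFun f (fun e => B (Fin.cons j e)) Z = 0 := by
      filter_upwards [Measure.ae_ae_of_ae_prod hcons] with Z hZ
      simp_rw [tensorFun_cons] at hZ
      exact congrFun (hind _ hZ)
    funext d
    rw [← Fin.cons_self_tail d]
    exact congrFun (eq_zero_of_tensorFun_ae_eq_zero hind _ (hslices.mono fun Z hZ => hZ (d 0))) _

theorem integrable_sq_tensorFun (hf : ∀ j, MemLp (f j) 2 μ) (B : (Fin N → ι) → ℝ) :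
    Integrable (fun X => tensorFun f B X ^ 2) (Measure.pi fun _ => μ) := by
  simp_rw [sq_tensorFun]
  exact integrable_finsetSum _ fun d _ => integrable_finsetSum _ fun d' _ =>
    (integrable_prod_mul_of_memLp (fun i => hf (d i)) (fun i => hf (d' i))).const_mul _

theorem integral_sq_tensorFun (hf : ∀ j, MemLp (f j) 2 μ) (B : (Fin N → ι) → ℝ) :
    ∫ X, tensorFun f B X ^ 2 ∂Measure.pi (fun _ => μ) = gramForm μ f B := by
  have hint (d d' : Fin N → ι) := integrable_prod_mul_of_memLp (fun i => hf (d i)) (fun i => hf (d' i))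
  simp_rw [sq_tensorFun]
  rw [integral_finsetSum _ fun d _ => integrable_finsetSum _ fun d' _ => (hint d d').const_mul _]
  refine Finset.sum_congr rfl fun d _ => ?_
  rw [integral_finsetSum _ fun d' _ => (hint d d').const_mul _]
  refine Finset.sum_congr rfl fun d' _ => ?_
  rw [integral_const_mul, integral_fintype_prod_eq_prod (f := fun i x => f (d i) x * f (d' i) x)]

theorem gramForm_pos (hf : ∀ j, MemLp (f j) 2 μ)
    (hind : ∀ c : ι → ℝ, (∀ᵐ x ∂μ, ∑ j, c j * f j x = 0) → c = 0)
    {B : (Fin N → ι) → ℝ} (hB : B ≠ 0) : 0 < gramForm μ f B := by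
  rw [← integral_sq_tensorFun hf]
  refine (integral_nonneg fun X => sq_nonneg _).lt_of_ne fun h => hB ?_
  refine eq_zero_of_tensorFun_ae_eq_zero hind B ?_
  filter_upwards [(integral_eq_zero_iff_of_nonneg (fun X => sq_nonneg _)
    (integrable_sq_tensorFun hf B)).1 h.symm] with X hX
  exact sq_eq_zero_iff.1 hX

end TensorFun

/-- Let `f 1, …, f M ∈ L²(ℝ^s)` be linearly independent, and for a tensor
`A` of order `N = 2n` and dimension `M` in each mode let
`h A (x₁,…,x_N) = ∑_d A d * ∏ i, f (d i) (x i)`.  If `{A λ}` is a family of tensors and `A*`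
a target tensor with `rank [A λ] < rank [A*]` for all `λ`, then `h A*` is bounded away from
the family `{h (A λ)}` in `L²`: there is `ε > 0` with `∫ |h (A λ) − h A*|² > ε` for all `λ`. -/
theorem score_functions_bounded_away (s n M : ℕ)
    (f : Fin M → (Fin s → ℝ) → ℝ)
    (hf : ∀ d, MemLp (f d) 2 (volume : Measure (Fin s → ℝ)))
    (hind : ∀ c : Fin M → ℝ,
      (∀ᵐ x ∂(volume : Measure (Fin s → ℝ)), ∑ d, c d * f d x = 0) → c = 0)
    {Λ : Type*} (Afam : Λ → (Fin (2 * n) → Fin M) → ℝ)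
    (Astar : (Fin (2 * n) → Fin M) → ℝ)
    (hrank : ∀ lam : Λ, (matricize (Afam lam)).rank < (matricize Astar).rank) :
    ∃ ε > (0 : ℝ), ∀ lam : Λ,
      ε < ∫ X : Fin (2 * n) → Fin s → ℝ,
        ((∑ d : Fin (2 * n) → Fin M, Afam lam d * ∏ i, f (d i) (X i)) -
         (∑ d : Fin (2 * n) → Fin M, Astar d * ∏ i, f (d i) (X i))) ^ 2 := by
  obtain ⟨c, hc, hgram⟩ := exists_pos_mul_norm_sq_le continuous_gramForm gramForm_smul
    fun B hB => gramForm_pos (μ := volume) hf hind hB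
  set r := (matricize Astar).rank
  rcases Nat.eq_zero_or_pos r with hr | hr
  · exact ⟨1, one_pos, fun lam => absurd (hrank lam) (by omega)⟩
  set C := {A : (Fin (2 * n) → Fin M) → ℝ | (matricize A).rank < r}
  have hC : IsClosed C := (Matrix.isClosed_setOf_rank_lt_s17 r).preimage continuous_matricize
  set δ := Metric.infDist Astar C
  have hδ : 0 < δ := (hC.notMem_iff_infDist_pos
    ⟨0, show (0 : Matrix _ _ ℝ).rank < r by rwa [Matrix.rank_zero]⟩).1 (lt_irrefl r)
  refine ⟨c * δ ^ 2 / 2, by positivity, fun lam => ?_⟩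
  have hdist : δ ≤ ‖Afam lam - Astar‖ := by
    rw [← dist_eq_norm, dist_comm]
    exact Metric.infDist_le_dist_of_mem (hrank lam)
  calc c * δ ^ 2 / 2 < c * δ ^ 2 := by linarith [mul_pos hc (pow_pos hδ 2)]
    _ ≤ c * ‖Afam lam - Astar‖ ^ 2 := by gcongr
    _ ≤ gramForm volume f (Afam lam - Astar) := hgram _
    _ = ∫ X, tensorFun f (Afam lam - Astar) X ^ 2 := (integral_sq_tensorFun hf _).symm
    _ = _ := by simp_rw [tensorFun_sub]; rfl
end
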